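/- For all u, v ∈ 𝕍, if u < v in the lexicographic order, then val(u) < val(v) as rational numbers. -/

import Mathlib

/-!
Words of 𝕍 form a prefix-free code: two of them that are comparable under the prefix order are
equal. Hence `u < v` in 𝕍 means that `u` and `v` first differ at some position `k`, with symbols
`a < b` there. At that position `val` gains at least `3^(-k)`, while the two tails contribute less
in absolute value, because `|val w| < 3/2` for every list `w`.
-/

/-- The three truth symbols F, 0 (Z), T. -/
inductive TSym : Type
  | F | Z | T
deriving DecidableEq

open TSym

/-- The operation u ≫ v on lists of symbols. -/
def lexOp (u v : List TSym) : List TSym :=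
  if u = [F] ∧ v = [F] then [F]
  else if u = [T] ∧ v = [T] then [T]
  else Z :: (u ++ v)

/-- The truth domain 𝕍 as an inductive predicate. -/
inductive Vmem : List TSym → Prop
  | F : Vmem [F]
  | T : Vmem [T]
  | op {u v : List TSym} : Vmem u → Vmem v → Vmem (lexOp u v)

def symRank : TSym → ℕ
  | F => 0 | Z => 1 | T => 2

/-- The order F < 0 < T on symbols. -/
def symLt (a b : TSym) : Prop := symRank a < symRank b

/-- Lexicographic order on lists induced by F < 0 < T. -/
def listLt (u v : List TSym) : Prop := List.Lex symLt u v

/-- Pointwise negation F ↦ T, T ↦ F, 0 ↦ 0. -/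
def symNeg : TSym → TSym
  | F => T | T => F | Z => Z

def negList (v : List TSym) : List TSym := v.map symNeg

def symVal : TSym → ℚ
  | F => -1 | Z => 0 | T => 1

/-- val([u₁,…,u_n]) = Σ symVal(u_i) · (1/3)^(i-1). -/
def val : List TSym → ℚ
  | [] => 0
  | a :: t => symVal a + val t / 3

open Classical in
/-- Lexicographic minimum. -/
noncomputable def minL (u v : List TSym) : List TSym := if listLt u v then u else v

open Classical in
/-- Lexicographic maximum. -/
noncomputable def maxL (u v : List TSym) : List TSym := if listLt u v then v else u

theorem Vmem.eq_F_or_eq_T_or_exists {w : List TSym} (hw : Vmem w) :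
    w = [TSym.F] ∨ w = [TSym.T] ∨ ∃ p q, Vmem p ∧ Vmem q ∧ w = Z :: (p ++ q) := by
  induction hw with
  | F => exact .inl rfl
  | T => exact .inr (.inl rfl)
  | @op u v hu hv _ _ =>
    unfold lexOp
    split_ifs
    · exact .inl rfl
    · exact .inr (.inl rfl)
    · exact .inr (.inr ⟨u, v, hu, hv, rfl⟩)

theorem Vmem.eq_singleton_of_prefix_or_prefix {u : List TSym} {x : TSym} (hu : Vmem u)
    (hx : x ≠ Z) (h : u <+: [x] ∨ [x] <+: u) : u = [x] := by
  rcases hu.eq_F_or_eq_T_or_exists with rfl | rfl | ⟨p, q, -, -, rfl⟩ <;> cases x <;> simp_all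

theorem Vmem.eq_of_prefix_or_prefix {u v : List TSym} (hu : Vmem u) (hv : Vmem v)
    (h : u <+: v ∨ v <+: u) : u = v := by
  induction hv generalizing u with
  | F => exact hu.eq_singleton_of_prefix_or_prefix (by decide) h
  | T => exact hu.eq_singleton_of_prefix_or_prefix (by decide) h
  | @op p q hp hq ihp ihq =>
    unfold lexOp at h ⊢
    split_ifs at h ⊢
    · exact hu.eq_singleton_of_prefix_or_prefix (by decide) h
    · exact hu.eq_singleton_of_prefix_or_prefix (by decide) h
    · rcases hu.eq_F_or_eq_T_or_exists with rfl | rfl | ⟨p', q', hp', hq', rfl⟩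
      · simp at h
      · simp at h
      simp only [List.cons_prefix_cons, true_and] at h
      have hpp : p' = p := ihp hp' <| by
        rcases h with h | h
        · exact List.prefix_or_prefix_of_prefix ((List.prefix_append p' q').trans h)
            (List.prefix_append p q)
        · exact (List.prefix_or_prefix_of_prefix ((List.prefix_append p q).trans h)
            (List.prefix_append p' q')).symm
      subst hpp
      rw [ihq hq' (by simpa only [List.prefix_append_right_inj] using h)]

theorem abs_val_lt (l : List TSym) : |val l| < 3 / 2 := by
  induction l with
  | nil => norm_num [val]
  | cons a t ih =>
    have ha : |symVal a| ≤ 1 := by cases a <;> norm_num [symVal]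
    calc |val (a :: t)| ≤ |symVal a| + |val t| / 3 := by
          rw [val]
          exact (abs_add_le _ _).trans_eq (by rw [abs_div]; norm_num)
      _ < 3 / 2 := by linarith

theorem symVal_add_one_le {a b : TSym} (h : symLt a b) : symVal a + 1 ≤ symVal b := by
  revert h
  cases a <;> cases b <;> norm_num [symLt, symRank, symVal]

theorem val_cons_lt_val_cons {a b : TSym} (hab : symLt a b) (s t : List TSym) :
    val (a :: s) < val (b :: t) := by
  have hs := abs_lt.mp (abs_val_lt s)
  have ht := abs_lt.mp (abs_val_lt t)
  have := symVal_add_one_le hab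
  simp only [val]
  linarith

theorem val_lt_val_of_lex {u v : List TSym} (h : List.Lex symLt u v) (hpre : ¬u <+: v) :
    val u < val v := by
  induction h with
  | nil => exact absurd List.nil_prefix hpre
  | cons _ ih =>
    have := ih fun hp => hpre (List.cons_prefix_cons.mpr ⟨rfl, hp⟩)
    simp only [val]
    linarith
  | rel hab => exact val_cons_lt_val_cons hab _ _

theorem val_strict_mono (u v : List TSym) (hu : Vmem u) (hv : Vmem v)
    (h : listLt u v) : val u < val v := by
  refine val_lt_val_of_lex h fun hpre => ?_
  obtain rfl := hu.eq_of_prefix_or_prefix hv (.inl hpre)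
  exact List.lex_irrefl (fun a => lt_irrefl (symRank a)) u h
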